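/- arXiv:1604.08546 — 2 statements merged into one kernel-verified Lean document; each statement's English description precedes it below -/
import Mathlib

section
/- Let C ⊆ ℝʳ be a compact convex set, let (b_n) ⊆ C converge to b ∈ C, and for a fixed matrix M and each c ∈ C define ℍ(c) = {ν ∈ ℝˢ : ν ≥ 0, Mν = c}. Assume ℍ(c) is nonempty and contained in the probability simplex for all c ∈ C. If F̄ is a continuous function on the probability simplex and F(c) = max{F̄(ν) : ν ∈ ℍ(c)}, then F is continuous at b; that is, F(b_n) → F(b). -/
/-!
Write `A` for `ν ↦ M ν`. Upper semicontinuity of `F` is compactness: the points of the simplex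
where `F̄ ≥ F b + ε` form a compact set whose image under `A` misses `b`, hence misses `bₙ` for
large `n`. For lower semicontinuity, take an optimal `ν₀ ∈ ℍ(b)` and any `μₙ ∈ ℍ(bₙ)`. Then
`bₙ - b = ∑ μₙ i • (A eᵢ - b)` lies in the cone spanned by the vectors `A eᵢ - b`. By the conic
Carathéodory theorem it has a representation with linearly independent support, and since
there are only finitely many supports, its coefficients `t` are `O(‖bₙ - b‖)`. The point
`t + (1 - ∑ t) • ν₀` then lies in `ℍ(bₙ)` and converges to `ν₀`, so
`liminf F(bₙ) ≥ F̄ ν₀ = F b`.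
-/

open Finset Function Filter Topology

theorem linearIndepOn_iff_of_fintype {ι R M : Type*} [Fintype ι] [Ring R] [AddCommGroup M]
    [Module R M] {v : ι → M} {s : Set ι} :
    LinearIndepOn R v s ↔ ∀ g : ι → R, support g ⊆ s → ∑ i, g i • v i = 0 → g = 0 := by
  classical
  rw [linearIndepOn_iff'']
  refine ⟨fun h g hgs hg => funext fun i => ?_, fun h t g hts htg hg i _ => ?_⟩
  · by_contra hi
    refine hi (h (support g).toFinset g (by simpa using hgs) (by simp) ?_ i (by simpa using hi))
    rwa [sum_subset (subset_univ _) fun j _ hj => by simp_all]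
  · refine congrFun (h g (fun j hj => hts ?_) ?_) i
    · by_contra hjt; exact hj (htg j hjt)
    · rwa [← sum_subset (subset_univ t) (fun j _ hj => by simp [htg j hj])]

section Caratheodory

variable {ι E : Type*} [Fintype ι]

theorem exists_nonneg_sub_smul_apply_eq_zero {t c : ι → ℝ} (ht : 0 ≤ t) {j : ι} (hj : 0 < c j) :
    ∃ α : ℝ, ∃ j₀, 0 < c j₀ ∧ 0 ≤ t - α • c ∧ (t - α • c) j₀ = 0 := by
  classical
  obtain ⟨j₀, hj₀, hmin⟩ :=
    (univ.filter (0 < c ·)).exists_min_image (fun i => t i / c i) ⟨j, by simpa using hj⟩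
  rw [mem_filter] at hj₀
  refine ⟨t j₀ / c j₀, j₀, hj₀.2, fun i => ?_, by simp [hj₀.2.ne']⟩
  rcases lt_or_ge 0 (c i) with hci | hci
  · have := hmin i (by simpa using hci)
    simp only [Pi.zero_apply, Pi.sub_apply, Pi.smul_apply, smul_eq_mul, sub_nonneg]
    rwa [← le_div_iff₀ hci]
  · have hα : 0 ≤ t j₀ / c j₀ := div_nonneg (ht j₀) hj₀.2.le
    simp only [Pi.zero_apply, Pi.sub_apply, Pi.smul_apply, smul_eq_mul, sub_nonneg]
    linarith [show 0 ≤ t i from ht i, mul_nonpos_of_nonneg_of_nonpos hα hci]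

variable [AddCommGroup E] [Module ℝ E] (w : ι → E)

theorem exists_support_ssubset_of_not_linearIndepOn {t : ι → ℝ} (ht : 0 ≤ t)
    (hw : ¬LinearIndepOn ℝ w (support t)) :
    ∃ t' : ι → ℝ, 0 ≤ t' ∧ ∑ i, t' i • w i = ∑ i, t i • w i ∧ support t' ⊂ support t := by
  obtain ⟨c, hc_supp, hc_sum, j, hj⟩ : ∃ c : ι → ℝ,
      support c ⊆ support t ∧ ∑ i, c i • w i = 0 ∧ ∃ j, 0 < c j := by
    simp only [linearIndepOn_iff_of_fintype, not_forall] at hw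
    obtain ⟨g, hg_supp, hg_sum, hg⟩ := hw
    obtain ⟨j, hj⟩ := Function.ne_iff.mp hg
    rcases (hj : g j ≠ 0).lt_or_gt with hneg | hpos
    · exact ⟨-g, by simpa using hg_supp, by simp [hg_sum], j, by simpa using hneg⟩
    · exact ⟨g, hg_supp, hg_sum, j, hpos⟩
  obtain ⟨α, j₀, hj₀, hnonneg, hzero⟩ := exists_nonneg_sub_smul_apply_eq_zero ht hj
  have hsub : support (t - α • c) ⊆ support t := fun i hi ht0 =>
    hi (by simp [ht0, notMem_support.mp fun h => hc_supp h ht0])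
  refine ⟨t - α • c, hnonneg, ?_, (Set.ssubset_iff_of_subset hsub).2 ⟨j₀, hc_supp hj₀.ne', ?_⟩⟩
  · simp [sub_smul, sum_sub_distrib, mul_smul, ← smul_sum, hc_sum]
  · exact notMem_support.mpr hzero

/-- Conic Carathéodory theorem. -/
theorem exists_nonneg_linearIndepOn_support {t : ι → ℝ} (ht : 0 ≤ t) :
    ∃ t' : ι → ℝ, 0 ≤ t' ∧ ∑ i, t' i • w i = ∑ i, t i • w i ∧
      LinearIndepOn ℝ w (support t') := by
  obtain ⟨t', ⟨ht', hsum⟩, hmin⟩ := (InvImage.wf support wellFounded_lt).has_min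
    {t' : ι → ℝ | 0 ≤ t' ∧ ∑ i, t' i • w i = ∑ i, t i • w i} ⟨t, ht, rfl⟩
  refine ⟨t', ht', hsum, by_contra fun hw => ?_⟩
  obtain ⟨t'', ht'', hsum', hss⟩ := exists_support_ssubset_of_not_linearIndepOn w ht' hw
  exact hmin t'' ⟨ht'', hsum'.trans hsum⟩ hss

end Caratheodory

section ConeBound

variable {ι E : Type*} [Fintype ι] [NormedAddCommGroup E] [NormedSpace ℝ E] (w : ι → E)

theorem norm_le_sum_of_nonneg {t : ι → ℝ} (ht : 0 ≤ t) : ‖t‖ ≤ ∑ i, t i :=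
  (pi_norm_le_iff_of_nonneg (sum_nonneg fun i _ => ht i)).2 fun i => by
    rw [Real.norm_of_nonneg (ht i)]
    exact single_le_sum (fun j _ => ht j) (mem_univ i)

theorem exists_norm_le_of_linearIndepOn {s : Set ι} (hs : LinearIndepOn ℝ w s) :
    ∃ K, ∀ t : ι → ℝ, support t ⊆ s → ‖t‖ ≤ K * ‖∑ i, t i • w i‖ := by
  let V : Submodule ℝ (ι → ℝ) := Submodule.pi sᶜ fun _ => ⊥
  have hV : ∀ t : ι → ℝ, t ∈ V ↔ support t ⊆ s := fun t => by
    simp only [V, Submodule.mem_pi, Set.mem_compl_iff, Submodule.mem_bot, support_subset_iff']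
  let L := (Fintype.linearCombination ℝ w).domRestrict V
  have hL : LinearMap.ker L = ⊥ := LinearMap.ker_eq_bot'.2 fun t ht =>
    Subtype.ext (linearIndepOn_iff_of_fintype.1 hs t ((hV t).1 t.2) ht)
  obtain ⟨K, -, hK⟩ := L.exists_antilipschitzWith hL
  exact ⟨K, fun t ht => hK.le_mul_norm (map_zero L) ⟨t, (hV t).2 ht⟩⟩

theorem exists_norm_le_of_linearIndepOn_support :
    ∃ K, ∀ t : ι → ℝ, LinearIndepOn ℝ w (support t) → ‖t‖ ≤ K * ‖∑ i, t i • w i‖ := by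
  have : ∀ s : Set ι, ∃ K, LinearIndepOn ℝ w s →
      ∀ t : ι → ℝ, support t ⊆ s → ‖t‖ ≤ K * ‖∑ i, t i • w i‖ := fun s => by
    by_cases hs : LinearIndepOn ℝ w s
    · exact (exists_norm_le_of_linearIndepOn w hs).imp fun _ hK _ => hK
    · exact ⟨0, fun h => absurd h hs⟩
  choose K hK using this
  obtain ⟨K₀, hK₀⟩ := Finite.exists_le K
  exact ⟨K₀, fun t ht => (hK _ ht t le_rfl).trans (by gcongr; exact hK₀ _)⟩

/-- A Hoffman-type bound. Carathéodory reduces to representations with linearly independent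
support, and there are only finitely many supports. -/
theorem exists_sum_le_mul_norm :
    ∃ K, ∀ t : ι → ℝ, 0 ≤ t → ∃ t' : ι → ℝ, 0 ≤ t' ∧ ∑ i, t' i • w i = ∑ i, t i • w i ∧
      ∑ i, t' i ≤ K * ‖∑ i, t i • w i‖ := by
  obtain ⟨K, hK⟩ := exists_norm_le_of_linearIndepOn_support w
  refine ⟨Fintype.card ι * K, fun t ht => ?_⟩
  obtain ⟨t', ht', hsum, hli⟩ := exists_nonneg_linearIndepOn_support w ht
  refine ⟨t', ht', hsum, ?_⟩
  calc ∑ i, t' i ≤ Fintype.card ι * ‖t'‖ := by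
        simpa using sum_le_card_nsmul univ t' ‖t'‖ fun i _ =>
          (Real.le_norm_self _).trans (norm_le_pi_norm t' i)
    _ ≤ Fintype.card ι * (K * ‖∑ i, t i • w i‖) := by
        rw [← hsum]; gcongr; exact hK t' hli
    _ = _ := (mul_assoc _ _ _).symm

end ConeBound

section Simplex

variable {ι E : Type*} [Fintype ι] [NormedAddCommGroup E] [NormedSpace ℝ E]

theorem norm_sub_le_one_of_mem_stdSimplex {μ ν : ι → ℝ} (hμ : μ ∈ stdSimplex ℝ ι)
    (hν : ν ∈ stdSimplex ℝ ι) : ‖μ - ν‖ ≤ 1 :=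
  (pi_norm_le_iff_of_nonneg zero_le_one).2 fun i => by
    obtain ⟨hμ0, hμ1⟩ := mem_Icc_of_mem_stdSimplex hμ i
    obtain ⟨hν0, hν1⟩ := mem_Icc_of_mem_stdSimplex hν i
    rw [Pi.sub_apply, Real.norm_eq_abs, abs_sub_le_iff]
    constructor <;> linarith

theorem exists_mem_stdSimplex_map_eq_norm_sub_le (A : (ι → ℝ) →ₗ[ℝ] E) {ν : ι → ℝ}
    (hν : ν ∈ stdSimplex ℝ ι) : ∃ K, ∀ μ ∈ stdSimplex ℝ ι,
      ∃ ν' ∈ stdSimplex ℝ ι, A ν' = A μ ∧ ‖ν' - ν‖ ≤ K * ‖A μ - A ν‖ := by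
  classical
  set w : ι → E := fun i => A (Pi.single i 1) - A ν
  have hw : ∀ t : ι → ℝ, ∑ i, t i • w i = A t - (∑ i, t i) • A ν := fun t => by
    simp_rw [w, smul_sub, sum_sub_distrib, sum_smul, ← map_smul, ← map_sum, ← Pi.single_smul',
      smul_eq_mul, mul_one, univ_sum_single]
  obtain ⟨K, hK⟩ := exists_sum_le_mul_norm w
  refine ⟨2 * K, fun μ hμ => ?_⟩
  obtain ⟨t, ht, hsum, hσ⟩ := hK μ hμ.1
  rw [hw μ, hμ.2, one_smul] at hsum hσ
  rw [hw t] at hsum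
  set σ := ∑ i, t i
  rcases le_or_gt σ 1 with hσ1 | hσ1
  · refine ⟨t + (1 - σ) • ν, ⟨fun i => ?_, ?_⟩, ?_, ?_⟩
    · exact add_nonneg (ht i) (mul_nonneg (sub_nonneg.2 hσ1) (hν.1 i))
    · simp [sum_add_distrib, ← mul_sum, hν.2, σ]
    · rw [map_add, map_smul]
      linear_combination (norm := module) hsum
    · have hσ0 : 0 ≤ σ := sum_nonneg fun i _ => ht i
      calc ‖t + (1 - σ) • ν - ν‖ = ‖t - σ • ν‖ := by congr 1; module
        _ ≤ ‖t‖ + σ * ‖ν‖ := by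
          grw [norm_sub_le, norm_smul, Real.norm_of_nonneg hσ0]
        _ ≤ σ + σ * 1 := by
          grw [norm_le_sum_of_nonneg ht, norm_le_sum_of_nonneg hν.1, hν.2]
        _ ≤ 2 * K * ‖A μ - A ν‖ := by linarith
  · refine ⟨μ, hμ, rfl, ?_⟩
    linarith [norm_sub_le_one_of_mem_stdSimplex hμ hν]

theorem exists_mem_stdSimplex_map_eq_tendsto {α : Type*} {l : Filter α}
    (A : (ι → ℝ) →ₗ[ℝ] E) {ν : ι → ℝ}
    (hν : ν ∈ stdSimplex ℝ ι) {μ : α → ι → ℝ} (hμ : ∀ a, μ a ∈ stdSimplex ℝ ι)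
    (hlim : Tendsto (fun a => A (μ a)) l (𝓝 (A ν))) :
    ∃ ν' : α → ι → ℝ, (∀ a, ν' a ∈ stdSimplex ℝ ι ∧ A (ν' a) = A (μ a)) ∧
      Tendsto ν' l (𝓝 ν) := by
  obtain ⟨K, hK⟩ := exists_mem_stdSimplex_map_eq_norm_sub_le A hν
  choose ν' hν' hAν' hnorm using fun a => hK (μ a) (hμ a)
  refine ⟨ν', fun a => ⟨hν' a, hAν' a⟩, tendsto_iff_norm_sub_tendsto_zero.2 <|
    squeeze_zero (fun _ => norm_nonneg _) hnorm ?_⟩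
  simpa using (tendsto_iff_norm_sub_tendsto_zero.1 hlim).const_mul K

end Simplex

theorem eventually_forall_lt_of_forall_le {X Y : Type*} [TopologicalSpace X]
    [TopologicalSpace Y] [T2Space Y] {S : Set X} (hS : IsCompact S) {f : X → ℝ}
    (hf : UpperSemicontinuousOn f S) {A : X → Y} (hA : Continuous A) {y : Y} {v a : ℝ}
    (hv : ∀ x ∈ S, A x = y → f x ≤ v) (ha : v < a) :
    ∀ᶠ z in 𝓝 y, ∀ x ∈ S, A x = z → f x < a := by
  have hT : IsCompact (A '' (S ∩ f ⁻¹' Set.Ici a)) :=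
    (hf.isCompact_inter_preimage_Ici hS a).image hA
  have hy : y ∉ A '' (S ∩ f ⁻¹' Set.Ici a) := fun ⟨x, ⟨hx, hxa⟩, hxy⟩ =>
    (hv x hx hxy).not_gt (ha.trans_le hxa)
  filter_upwards [hT.isClosed.isOpen_compl.mem_nhds hy] with z hz x hx hxz
  exact lt_of_not_ge fun hxa => hz ⟨x, ⟨hx, hxa⟩, hxz⟩

theorem stmt14_general (r s : ℕ) (M : Matrix (Fin r) (Fin s) ℝ)
    (C : Set (Fin r → ℝ))
    (b : Fin r → ℝ) (hb : b ∈ C)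
    (bn : ℕ → Fin r → ℝ) (hbn : ∀ n, bn n ∈ C)
    (hlim : Filter.Tendsto bn Filter.atTop (nhds b))
    (hfeas : ∀ c ∈ C,
      {ν : Fin s → ℝ | (∀ x, 0 ≤ ν x) ∧ M.mulVec ν = c}.Nonempty ∧
      {ν : Fin s → ℝ | (∀ x, 0 ≤ ν x) ∧ M.mulVec ν = c}
        ⊆ {ν : Fin s → ℝ | (∀ x, 0 ≤ ν x) ∧ ∑ x, ν x = 1})
    (Fbar : (Fin s → ℝ) → ℝ)
    (hFbar : ContinuousOn Fbar {ν : Fin s → ℝ | (∀ x, 0 ≤ ν x) ∧ ∑ x, ν x = 1})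
    (F : (Fin r → ℝ) → ℝ)
    (hF : ∀ c ∈ C,
      IsGreatest (Fbar '' {ν : Fin s → ℝ | (∀ x, 0 ≤ ν x) ∧ M.mulVec ν = c}) (F c)) :
    Filter.Tendsto (fun n => F (bn n)) Filter.atTop (nhds (F b)) := by
  obtain ⟨⟨ν₀, hν₀, hFν₀⟩, hF_le⟩ := hF b hb
  choose μ hμ hFμ using fun n => (hF (bn n) (hbn n)).1
  refine tendsto_order.2 ⟨fun a ha => ?_, fun a ha => ?_⟩
  · obtain ⟨ν, hν, hν_lim⟩ := exists_mem_stdSimplex_map_eq_tendsto M.mulVecLin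
      ((hfeas b hb).2 hν₀) (fun n => (hfeas _ (hbn n)).2 (hμ n))
      (by simpa [(hμ _).2, hν₀.2] using hlim)
    have hFν : Tendsto (fun n => Fbar (ν n)) atTop (𝓝 (F b)) := hFν₀ ▸
      ((hFbar ν₀ ((hfeas b hb).2 hν₀)).tendsto.comp
        (tendsto_nhdsWithin_iff.2 ⟨hν_lim, .of_forall fun n => (hν n).1⟩))
    filter_upwards [hFν.eventually (lt_mem_nhds ha)] with n hn
    refine hn.trans_le ((hF _ (hbn n)).2 ⟨ν n, ⟨(hν n).1.1, ?_⟩, rfl⟩)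
    simpa [(hμ n).2] using (hν n).2
  · have hupper := eventually_forall_lt_of_forall_le (isCompact_stdSimplex ℝ (Fin s))
      hFbar.upperSemicontinuousOn M.mulVecLin.continuous_of_finiteDimensional
      (fun ν hν hνb => hF_le ⟨ν, ⟨hν.1, hνb⟩, rfl⟩) ha
    filter_upwards [hlim hupper] with n hn
    exact hFμ n ▸ hn (μ n) ((hfeas _ (hbn n)).2 (hμ n)) (hμ n).2

/-- Continuity of the value function of an affinely constrained maximization
problem: if `ℍ(c) = {ν ≥ 0 : Mν = c}` is nonempty and contained in the
probability simplex for every `c` in a compact convex set `C`, `F̄` is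
continuous on the simplex, and `F(c)` is the maximum of `F̄` over `ℍ(c)`,
then `F(bₙ) → F(b)` along any sequence `bₙ → b` in `C`. -/
theorem stmt14 (r s : ℕ) (M : Matrix (Fin r) (Fin s) ℝ)
    (C : Set (Fin r → ℝ)) (hCc : IsCompact C) (hCv : Convex ℝ C)
    (b : Fin r → ℝ) (hb : b ∈ C)
    (bn : ℕ → Fin r → ℝ) (hbn : ∀ n, bn n ∈ C)
    (hlim : Filter.Tendsto bn Filter.atTop (nhds b))
    (hfeas : ∀ c ∈ C,
      {ν : Fin s → ℝ | (∀ x, 0 ≤ ν x) ∧ M.mulVec ν = c}.Nonempty ∧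
      {ν : Fin s → ℝ | (∀ x, 0 ≤ ν x) ∧ M.mulVec ν = c}
        ⊆ {ν : Fin s → ℝ | (∀ x, 0 ≤ ν x) ∧ ∑ x, ν x = 1})
    (Fbar : (Fin s → ℝ) → ℝ)
    (hFbar : ContinuousOn Fbar {ν : Fin s → ℝ | (∀ x, 0 ≤ ν x) ∧ ∑ x, ν x = 1})
    (F : (Fin r → ℝ) → ℝ)
    (hF : ∀ c ∈ C,
      IsGreatest (Fbar '' {ν : Fin s → ℝ | (∀ x, 0 ≤ ν x) ∧ M.mulVec ν = c}) (F c)) :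
    Filter.Tendsto (fun n => F (bn n)) Filter.atTop (nhds (F b)) :=
  stmt14_general r s M C b hb bn hbn hlim hfeas Fbar hFbar F hF
end

section
/- Let ψ(ρ) = H(ρ) − (log 2)·(1 − ρ^k − (1−ρ)^k) where H is the binary entropy with natural logarithm. For every δ ∈ (0,1] there exists k₀ such that for all k ≥ k₀ and all ρ with 1/k ≤ |2ρ−1| ≤ 1 − δ, one has ψ(ρ) ≤ −1/(4k²). -/
/-!
Write `t = 2ρ - 1`. Adding `2 (p - 1/2)²` to the binary entropy keeps it concave, since
`H'' = -1/(p(1-p)) ≤ -4`; being also symmetric about `1/2`, the sum is maximal there, so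
`H(ρ) ≤ log 2 - t²/2` (Pinsker's inequality against the fair coin). For `|t| ≥ 1/k` this gives
`ψ(ρ) ≤ -1/(2k²) + log 2 · (ρ^k + (1-ρ)^k)`, and for `|t| ≤ 1 - δ` the tail is at most
`2 log 2 · (1 - δ/2)^k`, which is eventually below `1/(4k²)`.
-/

open Real Set Filter Topology

namespace Real

lemma concaveOn_binEntropy_add_sq :
    ConcaveOn ℝ (Icc 0 1) (fun p ↦ binEntropy p + 2 * (p - 2⁻¹) ^ 2) := by
  refine concaveOn_of_hasDerivWithinAt2_nonpos (convex_Icc 0 1)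
    (f' := fun p ↦ log (1 - p) - log p + 4 * (p - 2⁻¹))
    (f'' := fun p ↦ -p⁻¹ - (1 - p)⁻¹ + 4)
    (binEntropy_continuous.continuousOn.add (by fun_prop)) ?_ ?_ ?_
  all_goals simp only [interior_Icc, mem_Ioo]
  · rintro p ⟨hp₀, hp₁⟩
    refine HasDerivAt.hasDerivWithinAt ?_
    convert (hasDerivAt_binEntropy hp₀.ne' hp₁.ne).fun_add
      (((hasDerivAt_id' p).sub_const 2⁻¹).fun_pow 2 |>.const_mul 2) using 1
    ring
  · rintro p ⟨hp₀, hp₁⟩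
    refine HasDerivAt.hasDerivWithinAt ?_
    have hlog₁ := ((hasDerivAt_id' p).const_sub 1).log (by linarith)
    have hlog := (hasDerivAt_id' p).log hp₀.ne'
    convert (hlog₁.fun_sub hlog).fun_add (((hasDerivAt_id' p).sub_const 2⁻¹).const_mul 4) using 1
    field_simp
    ring
  · rintro p ⟨hp₀, hp₁⟩
    have hq : 0 < 1 - p := by linarith
    have hsum : p⁻¹ + (1 - p)⁻¹ = 1 / (p * (1 - p)) := by field_simp; ring
    have hfour : 4 ≤ 1 / (p * (1 - p)) := by
      rw [le_div_iff₀ (by positivity)]; nlinarith [sq_nonneg (2 * p - 1)]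
    linarith

lemma binEntropy_le_log_two_sub_sq {p : ℝ} (hp₀ : 0 ≤ p) (hp₁ : p ≤ 1) :
    binEntropy p ≤ log 2 - (2 * p - 1) ^ 2 / 2 := by
  have h := concaveOn_binEntropy_add_sq.2 ⟨hp₀, hp₁⟩
    (show 1 - p ∈ Icc 0 1 from ⟨by linarith, by linarith⟩)
    (show (0 : ℝ) ≤ 2⁻¹ by norm_num) (show (0 : ℝ) ≤ 2⁻¹ by norm_num) (by norm_num)
  simp only [smul_eq_mul, binEntropy_one_sub] at h
  rw [show 2⁻¹ * p + 2⁻¹ * (1 - p) = (2⁻¹ : ℝ) by ring, binEntropy_two_inv] at h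
  linarith

end Real

lemma pow_add_one_sub_pow_le_two_mul_pow {δ ρ : ℝ} (hδ : 0 ≤ δ) (hρ : |2 * ρ - 1| ≤ 1 - δ) (k : ℕ) :
    ρ ^ k + (1 - ρ) ^ k ≤ 2 * (1 - δ / 2) ^ k := by
  obtain ⟨hlo, hhi⟩ := abs_le.1 hρ
  have h₁ : ρ ^ k ≤ (1 - δ / 2) ^ k := pow_le_pow_left₀ (by linarith) (by linarith) k
  have h₂ : (1 - ρ) ^ k ≤ (1 - δ / 2) ^ k := pow_le_pow_left₀ (by linarith) (by linarith) k
  linarith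

lemma eventually_mul_pow_le_one_div_sq (c : ℝ) {r : ℝ} (hr₀ : 0 ≤ r) (hr₁ : r < 1) :
    ∀ᶠ k : ℕ in atTop, c * r ^ k ≤ 1 / (k : ℝ) ^ 2 := by
  have hlim : Tendsto (fun k : ℕ ↦ c * ((k : ℝ) ^ 2 * r ^ k)) atTop (𝓝 0) := by
    simpa using (tendsto_pow_const_mul_const_pow_of_lt_one 2 hr₀ hr₁).const_mul c
  filter_upwards [hlim.eventually (eventually_le_nhds one_pos), eventually_ge_atTop 1]
    with k hk hk₁
  rw [le_div_iff₀ (by positivity)]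
  linarith

/-- Negativity of `ψ(ρ) = H(ρ) − (log 2)·(1 − ρ^k − (1−ρ)^k)` for intermediate
overlaps: for every `δ ∈ (0,1]` there is `k₀` such that for all `k ≥ k₀` and
all `ρ` with `1/k ≤ |2ρ−1| ≤ 1−δ`, one has `ψ(ρ) ≤ −1/(4k²)`. -/
theorem stmt17 (δ : ℝ) (hδ0 : 0 < δ) (hδ1 : δ ≤ 1) :
    ∃ k₀ : ℕ, ∀ k : ℕ, k₀ ≤ k → ∀ ρ : ℝ,
      1 / (k : ℝ) ≤ |2 * ρ - 1| → |2 * ρ - 1| ≤ 1 - δ →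
      (-ρ * Real.log ρ - (1 - ρ) * Real.log (1 - ρ))
          - Real.log 2 * (1 - ρ ^ k - (1 - ρ) ^ k)
        ≤ -1 / (4 * (k : ℝ) ^ 2) := by
  obtain ⟨k₀, hk₀⟩ := eventually_atTop.1 <|
    eventually_mul_pow_le_one_div_sq (8 * log 2) (by linarith : 0 ≤ 1 - δ / 2) (by linarith)
  refine ⟨k₀, fun k hk ρ hlow hupp => ?_⟩
  obtain ⟨hρ₀, hρ₁⟩ : 0 ≤ ρ ∧ ρ ≤ 1 := by constructor <;> linarith [abs_le.1 hupp]
  have hentropy : -ρ * log ρ - (1 - ρ) * log (1 - ρ) ≤ log 2 - (2 * ρ - 1) ^ 2 / 2 := by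
    simpa [binEntropy, log_inv, neg_mul] using binEntropy_le_log_two_sub_sq hρ₀ hρ₁
  have hsq : 1 / (k : ℝ) ^ 2 ≤ (2 * ρ - 1) ^ 2 := by
    simpa only [one_div_pow, sq_abs] using pow_le_pow_left₀ (by positivity) hlow 2
  have htail := mul_le_mul_of_nonneg_left (pow_add_one_sub_pow_le_two_mul_pow hδ0.le hupp k)
    (log_pos one_lt_two).le
  have hk := hk₀ k hk
  rw [show -1 / (4 * (k : ℝ) ^ 2) = -(1 / (k : ℝ) ^ 2) / 4 by ring]
  linarith
end
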